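/- For any g ∈ GL(d,ℝ) and any unit vector v ∈ ℝ^d, the gap distance from the projective point g·v̄ to the direction of maximum growth u(g) satisfies d(u(g), gv) ≤ (a₂(g)/a₁(g)) · (‖g‖/‖gv‖). -/

import Mathlib

open scoped RealInnerProductSpace
open Filter

noncomputable section

/-- Euclidean space `ℝ^d`. -/
abbrev E (d : ℕ) := EuclideanSpace ℝ (Fin d)

/-- The operator norm of a `d × d` real matrix, acting on Euclidean space. -/
def opNorm {d : ℕ} (g : Matrix (Fin d) (Fin d) ℝ) : ℝ :=
  ‖(Matrix.toEuclideanLin g).toContinuousLinearMap‖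

/-- The action of a matrix on a Euclidean vector. -/
def act {d : ℕ} (g : Matrix (Fin d) (Fin d) ℝ) (v : E d) : E d :=
  Matrix.toEuclideanLin g v

/-- The norm of `v ∧ w` in `Λ² ℝ^d`. -/
def wedgeNorm {d : ℕ} (v w : E d) : ℝ :=
  Real.sqrt (‖v‖ ^ 2 * ‖w‖ ^ 2 - ⟪v, w⟫ ^ 2)

/-- The gap distance `d(v̄, w̄) = ‖v ∧ w‖ / (‖v‖ ‖w‖)` on projective space. -/
def gapDist {d : ℕ} (v w : E d) : ℝ := wedgeNorm v w / (‖v‖ * ‖w‖)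

/-- The operator norm of `Λ² g`, computed on the decomposable generators coming from
orthonormal pairs. -/
def lam2Norm {d : ℕ} (g : Matrix (Fin d) (Fin d) ℝ) : ℝ :=
  sSup {r | ∃ v w : E d, ‖v‖ = 1 ∧ ‖w‖ = 1 ∧ ⟪v, w⟫ = 0 ∧
    r = wedgeNorm (act g v) (act g w)}

/-- Spectral radius: the maximal absolute value of the complex eigenvalues. -/
def specRad {d : ℕ} (g : Matrix (Fin d) (Fin d) ℝ) : ℝ :=
  sSup ((fun z : ℂ => ‖z‖) '' spectrum ℂ (g.map (algebraMap ℝ ℂ)))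

/-- Singular value decomposition data: `g = L Δ R` with `L, R` orthogonal and
`Δ = diagonal a`, the `a i` positive and in decreasing order (so `a i = a_{i+1}(g)`). -/
structure SVD {d : ℕ} (g : Matrix (Fin d) (Fin d) ℝ) (L : Matrix (Fin d) (Fin d) ℝ)
    (a : Fin d → ℝ) (R : Matrix (Fin d) (Fin d) ℝ) : Prop where
  orthL : L * L.transpose = 1
  orthR : R * R.transpose = 1
  anti : Antitone a
  pos : ∀ i, 0 < a i
  eq : g = L * Matrix.diagonal a * R

/-- The `i`-th standard basis vector of `ℝ^d`. -/
def stdVec {d : ℕ} (i : Fin d) : E d := EuclideanSpace.single i 1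

/-!
Write `g v = L (Δ w)` with `w = R v` a unit vector. Since `L` is orthogonal,
`d(u(g), gv) = ‖e₁ ∧ Δw‖ / ‖gv‖`, and `‖e₁ ∧ Δw‖² = ∑_{i ≥ 2} aᵢ² wᵢ² ≤ a₂²`.
Finally `a₁ = ‖g (Rᵀ e₁)‖ ≤ ‖g‖`.
-/

section

variable {d : ℕ}

lemma act_mul (A B : Matrix (Fin d) (Fin d) ℝ) (v : E d) :
    act (A * B) v = act A (act B v) := by
  simp [act]

lemma act_diagonal_apply (a : Fin d → ℝ) (x : E d) (i : Fin d) :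
    act (Matrix.diagonal a) x i = a i * x i := by
  simp [act, Matrix.mulVec_diagonal]

lemma norm_act_le_opNorm_mul (g : Matrix (Fin d) (Fin d) ℝ) (v : E d) :
    ‖act g v‖ ≤ opNorm g * ‖v‖ :=
  (Matrix.toEuclideanLin g).toContinuousLinearMap.le_opNorm v

lemma norm_stdVec (i : Fin d) : ‖stdVec i‖ = 1 := by
  simp [stdVec]

lemma inner_act_act_of_mul_transpose_eq_one {L : Matrix (Fin d) (Fin d) ℝ}
    (hL : L * L.transpose = 1) (x y : E d) : ⟪act L x, act L y⟫ = ⟪x, y⟫ := by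
  simp only [EuclideanSpace.inner_eq_star_dotProduct, act, Matrix.ofLp_toLpLin,
    Matrix.toLin'_apply, star_trivial, Matrix.dotProduct_mulVec, Matrix.vecMul_mulVec,
    mul_eq_one_comm.mp hL, Matrix.vecMul_one]

lemma norm_act_of_mul_transpose_eq_one {L : Matrix (Fin d) (Fin d) ℝ}
    (hL : L * L.transpose = 1) (x : E d) : ‖act L x‖ = ‖x‖ := by
  simpa using congrArg Real.sqrt (inner_act_act_of_mul_transpose_eq_one hL x x)

lemma wedgeNorm_act_of_mul_transpose_eq_one {L : Matrix (Fin d) (Fin d) ℝ}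
    (hL : L * L.transpose = 1) (x y : E d) : wedgeNorm (act L x) (act L y) = wedgeNorm x y := by
  simp only [wedgeNorm, norm_act_of_mul_transpose_eq_one hL,
    inner_act_act_of_mul_transpose_eq_one hL]

lemma wedgeNorm_stdVec (i : Fin d) (x : E d) :
    wedgeNorm (stdVec i) x = √(∑ j ∈ Finset.univ.erase i, x j ^ 2) := by
  rw [wedgeNorm, norm_stdVec, stdVec, EuclideanSpace.inner_single_left, EuclideanSpace.norm_sq_eq,
    ← Finset.add_sum_erase _ _ (Finset.mem_univ i)]
  simp

lemma wedgeNorm_stdVec_act_diagonal_le {a : Fin d → ℝ} {c : ℝ} {i : Fin d} (hc : 0 ≤ c)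
    (ha : ∀ j ≠ i, |a j| ≤ c) (w : E d) :
    wedgeNorm (stdVec i) (act (Matrix.diagonal a) w) ≤ c * ‖w‖ := by
  rw [wedgeNorm_stdVec, Real.sqrt_le_left (by positivity), mul_pow, EuclideanSpace.norm_sq_eq,
    Finset.mul_sum]
  calc ∑ j ∈ Finset.univ.erase i, act (Matrix.diagonal a) w j ^ 2
      ≤ ∑ j ∈ Finset.univ.erase i, c ^ 2 * ‖w j‖ ^ 2 := by
        refine Finset.sum_le_sum fun j hj => ?_
        rw [act_diagonal_apply, mul_pow, Real.norm_eq_abs, sq_abs, ← sq_abs (a j)]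
        gcongr
        exact ha j (Finset.ne_of_mem_erase hj)
    _ ≤ ∑ j, c ^ 2 * ‖w j‖ ^ 2 :=
        Finset.sum_le_sum_of_subset_of_nonneg (Finset.erase_subset _ _)
          fun _ _ _ => by positivity

lemma abs_le_opNorm_mul_diagonal_mul {L R : Matrix (Fin d) (Fin d) ℝ} (hL : L * L.transpose = 1)
    (hR : R * R.transpose = 1) (a : Fin d → ℝ) (i : Fin d) :
    |a i| ≤ opNorm (L * Matrix.diagonal a * R) := by
  have hRt : R.transpose * R.transpose.transpose = 1 := by
    rw [Matrix.transpose_transpose, mul_eq_one_comm.mp hR]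
  have hRRt : act R (act R.transpose (stdVec i)) = stdVec i := by
    rw [← act_mul, hR]
    simp [act]
  have hdiag : act (Matrix.diagonal a) (stdVec i) = a i • stdVec i := by
    ext j
    rw [act_diagonal_apply]
    by_cases hj : j = i <;> simp [stdVec, hj]
  simpa [act_mul, hRRt, hdiag, norm_smul, norm_stdVec, norm_act_of_mul_transpose_eq_one hL,
    norm_act_of_mul_transpose_eq_one hRt] using
    norm_act_le_opNorm_mul (L * Matrix.diagonal a * R) (act R.transpose (stdVec i))

end

/-- For `g ∈ GL(d,ℝ)` with SVD `g = L Δ R` and any unit vector `v`, the gap distance from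
`g·v̄` to the direction of maximum growth `u(g) = [L e₁]` satisfies
`d(u(g), gv) ≤ (a₂(g)/a₁(g)) · (‖g‖/‖gv‖)`. -/
theorem stmt_2 {d : ℕ} (hd : 2 ≤ d) (g L R : Matrix (Fin d) (Fin d) ℝ)
    (a : Fin d → ℝ) (h : SVD g L a R) (v : E d) (hv : ‖v‖ = 1) :
    gapDist (act L (stdVec ⟨0, by omega⟩)) (act g v) ≤
      (a ⟨1, by omega⟩ / a ⟨0, by omega⟩) * (opNorm g / ‖act g v‖) := by
  set i₀ : Fin d := ⟨0, by omega⟩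
  set i₁ : Fin d := ⟨1, by omega⟩
  have hwedge : wedgeNorm (stdVec i₀) (act (Matrix.diagonal a) (act R v)) ≤ a i₁ := by
    have hle : ∀ j ≠ i₀, |a j| ≤ a i₁ := fun j hj => by
      rw [abs_of_pos (h.pos j)]
      exact h.anti (Fin.le_def.mpr (Nat.one_le_iff_ne_zero.mpr fun h0 => hj (Fin.ext h0)))
    simpa [norm_act_of_mul_transpose_eq_one h.orthR, hv] using
      wedgeNorm_stdVec_act_diagonal_le (h.pos i₁).le hle (act R v)
  have hop : a i₀ ≤ opNorm g := by
    simpa [abs_of_pos (h.pos i₀), ← h.eq] using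
      abs_le_opNorm_mul_diagonal_mul h.orthL h.orthR a i₀
  rw [gapDist, norm_act_of_mul_transpose_eq_one h.orthL, norm_stdVec, one_mul, mul_div_assoc']
  refine div_le_div_of_nonneg_right ?_ (norm_nonneg _)
  calc wedgeNorm (act L (stdVec i₀)) (act g v)
      = wedgeNorm (stdVec i₀) (act (Matrix.diagonal a) (act R v)) := by
        rw [h.eq, act_mul, act_mul, wedgeNorm_act_of_mul_transpose_eq_one h.orthL]
    _ ≤ a i₁ := hwedge
    _ = a i₁ / a i₀ * a i₀ := (div_mul_cancel₀ _ (h.pos i₀).ne').symm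
    _ ≤ a i₁ / a i₀ * opNorm g :=
        mul_le_mul_of_nonneg_left hop (div_pos (h.pos i₁) (h.pos i₀)).le
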